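/- For all natural numbers a, m, r with a ≥ 2 and r ≥ 1, Σ_{k=1}^m k^{a−1}·C(r+m−k−1, r−1) = Σ_{b=1}^{a−1} E(a−1, b−1)·C(r+m+b−1, r+a−1), where C(·,·) is the binomial coefficient and E(·,·) are the Eulerian numbers. -/

import Mathlib

/-!
Worpitzky's identity `x ^ n = ∑ j, E(n, j) * C(x + j, n)` turns the left-hand side into a
combination of convolutions `∑_{k + l = m} C(k + j, n) * C(l + q, q)`. Each of them is an instance
of the upper Vandermonde identity `∑_{k + l = N} C(k, a) * C(l, b) = C(N + 1, a + b + 1)`: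
the shifts by `j ≤ n` and `q` only drop terms that vanish anyway.
-/

/-- Eulerian numbers: `E(0,0) = 1`, `E(0,j) = 0` for `j ≥ 1`, vanishing for negative second
argument, and `E(n,j) = (j+1)·E(n-1,j) + (n-j)·E(n-1,j-1)` for `n ≥ 1`. -/
def eulerianNum : ℕ → ℕ → ℕ
  | 0, 0 => 1
  | 0, _ + 1 => 0
  | n + 1, 0 => eulerianNum n 0
  | n + 1, j + 1 => (j + 2) * eulerianNum n (j + 1) + (n - j) * eulerianNum n j

open Finset

theorem eulerianNum_eq_zero_of_lt {n j : ℕ} (h : n < j) : eulerianNum n j = 0 := by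
  induction n generalizing j with
  | zero => obtain ⟨j, rfl⟩ := Nat.exists_eq_add_one.2 h; rfl
  | succ n ih =>
    obtain ⟨j, rfl⟩ := Nat.exists_eq_add_one.2 (Nat.zero_lt_of_lt h)
    simp [eulerianNum, ih (Nat.lt_of_succ_lt_succ h), ih (Nat.lt_of_succ_lt h)]

theorem eulerianNum_self {n : ℕ} (hn : n ≠ 0) : eulerianNum n n = 0 := by
  obtain ⟨n, rfl⟩ := Nat.exists_eq_add_one_of_ne_zero hn
  simp [eulerianNum, eulerianNum_eq_zero_of_lt (Nat.lt_succ_self n)]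

theorem mul_add_choose_eq {x j n : ℕ} (h : j ≤ n) :
    x * (x + j).choose n =
      (n - j) * (x + j + 1).choose (n + 1) + (j + 1) * (x + j).choose (n + 1) := by
  obtain ⟨d, rfl⟩ := Nat.exists_eq_add_of_le h
  rw [Nat.add_sub_cancel_left, Nat.choose_succ_succ']
  rcases lt_or_ge x d with hx | hx
  · simp [Nat.choose_eq_zero_of_lt (show x + j < j + d by omega),
      Nat.choose_eq_zero_of_lt (show x + j < j + d + 1 by omega)]
  · obtain ⟨y, rfl⟩ := Nat.exists_eq_add_of_le hx
    have absorb := Nat.choose_succ_right_eq (d + y + j) (j + d)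
    rw [show d + y + j - (j + d) = y by omega] at absorb
    linarith

theorem pow_eq_sum_eulerianNum_mul_choose (n x : ℕ) :
    x ^ n = ∑ j ∈ range (n + 1), eulerianNum n j * (x + j).choose n := by
  induction n with
  | zero => simp [eulerianNum]
  | succ n ih =>
    set T : ℕ → ℕ := fun j ↦ (j + 1) * eulerianNum n j * (x + j).choose (n + 1)
    set U : ℕ → ℕ := fun j ↦ (n - j) * eulerianNum n j * (x + j + 1).choose (n + 1)
    have hx : x ^ (n + 1) = ∑ j ∈ range (n + 1), (U j + T j) := by
      rw [pow_succ, ih, sum_mul]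
      refine sum_congr rfl fun j hj ↦ ?_
      rw [mul_right_comm, mul_assoc, mul_add_choose_eq (Nat.lt_succ_iff.1 (mem_range.1 hj))]
      ring
    have hT : ∑ j ∈ range (n + 1), T j = ∑ j ∈ range (n + 1), T (j + 1) + T 0 := by
      rw [← sum_range_succ', sum_range_succ _ (n + 1), left_eq_add]
      simp [T, eulerianNum_eq_zero_of_lt (Nat.lt_succ_self n)]
    have hE : ∀ j,
        eulerianNum (n + 1) (j + 1) * (x + (j + 1)).choose (n + 1) = T (j + 1) + U j := by
      intro j
      simp only [eulerianNum, T, U, ← add_assoc]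
      ring
    rw [hx, sum_range_succ' _ (n + 1), sum_congr rfl fun j _ ↦ hE j, sum_add_distrib,
      sum_add_distrib, hT]
    simp only [eulerianNum, T]
    ring

theorem sum_antidiagonal_choose_mul_choose (a b N : ℕ) :
    ∑ p ∈ antidiagonal N, p.1.choose a * p.2.choose b = (N + 1).choose (a + b + 1) := by
  induction N generalizing a with
  | zero => cases a <;> cases b <;> simp [Nat.choose_eq_zero_of_lt]
  | succ N ih =>
    rw [Nat.sum_antidiagonal_succ]
    cases a with
    | zero =>
      have ih0 := ih 0
      simp only [Nat.choose_zero_right, one_mul, zero_add] at ih0 ⊢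
      rw [ih0, Nat.choose_succ_succ' (N + 1)]
    | succ a =>
      simp only [Nat.choose_zero_succ, zero_mul, zero_add, Nat.choose_succ_succ' _ a, add_mul,
        sum_add_distrib, ih]
      rw [show a + 1 + b + 1 = a + b + 1 + 1 by ring, Nat.choose_succ_succ' (N + 1)]

theorem sum_antidiagonal_choose_add_mul {a j : ℕ} (h : j ≤ a) (f : ℕ → ℕ) (N : ℕ) :
    ∑ p ∈ antidiagonal N, (p.1 + j).choose a * f p.2 =
      ∑ p ∈ antidiagonal (N + j), p.1.choose a * f p.2 := by
  induction j generalizing N with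
  | zero => rfl
  | succ j ih =>
    -- the extra term `(0 + j).choose a * f (N + 1)` of the longer antidiagonal vanishes
    have hstep := Nat.sum_antidiagonal_succ (n := N) (f := fun p ↦ (p.1 + j).choose a * f p.2)
    simp only [zero_add, Nat.choose_eq_zero_of_lt (Nat.lt_of_succ_le h), zero_mul] at hstep
    calc ∑ p ∈ antidiagonal N, (p.1 + (j + 1)).choose a * f p.2
        = ∑ p ∈ antidiagonal N, (p.1 + 1 + j).choose a * f p.2 := by
          simp only [add_assoc, add_comm 1 j]
      _ = ∑ p ∈ antidiagonal (N + 1 + j), p.1.choose a * f p.2 := by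
          rw [← hstep, ih (Nat.le_of_succ_le h)]
      _ = ∑ p ∈ antidiagonal (N + (j + 1)), p.1.choose a * f p.2 := by
          rw [add_assoc, add_comm 1 j]

theorem sum_antidiagonal_add_choose_mul_add_choose {a b j c : ℕ} (hj : j ≤ a) (hc : c ≤ b)
    (N : ℕ) :
    ∑ p ∈ antidiagonal N, (p.1 + j).choose a * (p.2 + c).choose b =
      (N + j + c + 1).choose (a + b + 1) :=
  calc ∑ p ∈ antidiagonal N, (p.1 + j).choose a * (p.2 + c).choose b
      = ∑ p ∈ antidiagonal (N + j), p.1.choose a * (p.2 + c).choose b :=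
        sum_antidiagonal_choose_add_mul hj (fun k ↦ (k + c).choose b) N
    _ = ∑ p ∈ antidiagonal (N + j), (p.1 + c).choose b * p.2.choose a := by
        rw [← Nat.sum_antidiagonal_swap]
        exact sum_congr rfl fun _ _ ↦ mul_comm _ _
    _ = ∑ p ∈ antidiagonal (N + j + c), p.1.choose b * p.2.choose a :=
        sum_antidiagonal_choose_add_mul hc (fun k ↦ k.choose a) _
    _ = (N + j + c + 1).choose (a + b + 1) := by
        rw [sum_antidiagonal_choose_mul_choose, add_comm b a]

theorem sum_antidiagonal_pow_mul_choose (n q m : ℕ) :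
    ∑ p ∈ antidiagonal m, p.1 ^ n * (p.2 + q).choose q =
      ∑ j ∈ range (n + 1), eulerianNum n j * (m + j + q + 1).choose (n + q + 1) := by
  simp_rw [pow_eq_sum_eulerianNum_mul_choose n, sum_mul]
  rw [sum_comm]
  refine sum_congr rfl fun j hj ↦ ?_
  simp_rw [mul_assoc, ← mul_sum]
  rw [sum_antidiagonal_add_choose_mul_add_choose (Nat.lt_succ_iff.1 (mem_range.1 hj)) le_rfl]

theorem stmt11 (a m r : ℕ) (ha : 2 ≤ a) (hr : 1 ≤ r) :
    ∑ k ∈ Finset.Icc 1 m, k ^ (a - 1) * (r + m - k - 1).choose (r - 1) =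
      ∑ b ∈ Finset.Icc 1 (a - 1),
        eulerianNum (a - 1) (b - 1) * (r + m + b - 1).choose (r + a - 1) := by
  obtain ⟨n, rfl⟩ : ∃ n, a = n + 1 := ⟨a - 1, by omega⟩
  obtain ⟨q, rfl⟩ : ∃ q, r = q + 1 := ⟨r - 1, by omega⟩
  have hL : ∑ k ∈ Icc 1 m, k ^ n * (q + 1 + m - k - 1).choose q =
      ∑ p ∈ antidiagonal m, p.1 ^ n * (p.2 + q).choose q := by
    rw [Nat.sum_antidiagonal_eq_sum_range_succ (fun i l ↦ i ^ n * (l + q).choose q),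
      sum_subset (fun k hk ↦ mem_range.2 (Nat.lt_succ_of_le (mem_Icc.1 hk).2))
        fun k hk hk' ↦ ?_]
    · refine sum_congr rfl fun k hk ↦ ?_
      rw [show q + 1 + m - k - 1 = m - k + q by have := mem_range.1 hk; omega]
    · obtain rfl : k = 0 := by simp only [mem_range, mem_Icc] at hk hk'; omega
      rw [zero_pow (by omega), zero_mul]
  have hR : ∑ b ∈ Icc 1 n,
        eulerianNum n (b - 1) * (q + 1 + m + b - 1).choose (q + 1 + (n + 1) - 1) =
      ∑ j ∈ range n, eulerianNum n j * (m + j + q + 1).choose (n + q + 1) := by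
    rw [← Ico_add_one_right_eq_Icc, sum_Ico_eq_sum_range, Nat.add_sub_cancel]
    refine sum_congr rfl fun j _ ↦ ?_
    rw [show 1 + j - 1 = j by omega, show q + 1 + m + (1 + j) - 1 = m + j + q + 1 by omega,
      show q + 1 + (n + 1) - 1 = n + q + 1 by omega]
  simp only [Nat.add_sub_cancel]
  rw [hL, hR, sum_antidiagonal_pow_mul_choose, sum_range_succ, eulerianNum_self (by omega),
    zero_mul, add_zero]
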